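/- Let σ, μ be positive locally finite Borel measures on ℝⁿ, (λ_Q)_{Q ∈ 𝒟} nonnegative, 1 < p < ∞, and s = q ∈ (1, p). Then the inequality ‖(∑_{Q ∈ 𝒟} λ_Q^q (∫_Q f dσ)^q χ_Q)^{1/q}‖_{L^q(μ)} ≤ C ‖f‖_{L^p(σ)} for all nonnegative f holds if and only if the function ∑_{Q ∈ 𝒟} λ_Q^q σ(Q)^{q−1} μ(Q) χ_Q belongs to L^{(p/q)'}(σ), where (p/q)' is the Hölder conjugate of p/q. -/

import Mathlib

/-!
Write `G = ∑_Q c_Q χ_Q` with `c_Q = λ_Q^q σ(Q)^(q-1) μ(Q)` and `s = (p/q)'`.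

Sufficiency: by Hölder on each cube, `(∫_Q f dσ)^q ≤ σ(Q)^(q-1) ∫_Q f^q dσ`, so the left side
is at most `∫ G f^q dσ`, and Hölder with the exponents `s` and `p/q` finishes.

Necessity: the cubes containing a point form a chain, so
`G^s ≤ s ∑_Q c_Q χ_Q (∑_{R ⊇ Q} c_R)^(s-1)`, and `G ≥ ∑_{R ⊇ Q} c_R` on `Q`. Testing with
`f = G^((s-1)/q)` therefore gives `∫ G^s dσ ≤ s C^q (∫ G^s dσ)^(q/p)`, which bounds `∫ G^s dσ`
as soon as it is finite; finiteness is arranged by summing over finitely many cubes and passing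
to the supremum.
-/

open MeasureTheory ENNReal

noncomputable section

def DyadicCube (n : ℕ) (k : ℤ) (j : Fin n → ℤ) : Set (Fin n → ℝ) :=
  {x | ∀ i, (j i : ℝ) / 2 ^ k ≤ x i ∧ x i < ((j i : ℝ) + 1) / 2 ^ k}

def IsDyadicCube {n : ℕ} (Q : Set (Fin n → ℝ)) : Prop :=
  ∃ k j, Q = DyadicCube n k j

section DyadicCube

variable {n : ℕ}

theorem mem_dyadicCube_iff {k : ℤ} {j : Fin n → ℤ} {x : Fin n → ℝ} :
    x ∈ DyadicCube n k j ↔ ∀ i, ⌊x i * 2 ^ k⌋ = j i := by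
  have h2 : (0 : ℝ) < 2 ^ k := zpow_pos two_pos k
  simp only [DyadicCube, Set.mem_ofPred_eq, Int.floor_eq_iff, div_le_iff₀ h2, lt_div_iff₀ h2]

theorem Int.floor_mul_two_zpow_eq_of_le {k' k : ℤ} (hk : k' ≤ k) {a b : ℝ}
    (h : ⌊a * 2 ^ k⌋ = ⌊b * 2 ^ k⌋) : ⌊a * 2 ^ k'⌋ = ⌊b * 2 ^ k'⌋ := by
  obtain ⟨m, rfl⟩ : ∃ m : ℕ, k = k' + m := ⟨(k - k').toNat, by omega⟩
  have coarsen : ∀ c : ℝ, ⌊c * 2 ^ k'⌋ = ⌊c * 2 ^ (k' + m)⌋ / (2 ^ m : ℕ) := by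
    intro c
    rw [← Int.floor_div_natCast, zpow_add₀ two_ne_zero, zpow_natCast]
    push_cast
    field_simp
  rw [coarsen a, coarsen b, h]

theorem DyadicCube.subset_of_le {k' k : ℤ} {j' j : Fin n → ℤ} (hk : k' ≤ k)
    (h : (DyadicCube n k j ∩ DyadicCube n k' j').Nonempty) :
    DyadicCube n k j ⊆ DyadicCube n k' j' := by
  obtain ⟨z, hz, hz'⟩ := h
  intro y hy
  rw [mem_dyadicCube_iff] at hz hz' hy ⊢
  intro i
  rw [← hz' i]
  exact Int.floor_mul_two_zpow_eq_of_le hk ((hy i).trans (hz i).symm)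

theorem IsDyadicCube.subset_or_subset {Q R : Set (Fin n → ℝ)} (hQ : IsDyadicCube Q)
    (hR : IsDyadicCube R) (h : (Q ∩ R).Nonempty) : Q ⊆ R ∨ R ⊆ Q := by
  obtain ⟨k, j, rfl⟩ := hQ
  obtain ⟨k', j', rfl⟩ := hR
  rcases le_total k' k with hk | hk
  · exact .inl (DyadicCube.subset_of_le hk h)
  · exact .inr (DyadicCube.subset_of_le hk (Set.inter_comm _ _ ▸ h))

theorem DyadicCube.eq_pi (k : ℤ) (j : Fin n → ℤ) :
    DyadicCube n k j = Set.univ.pi fun i => Set.Ico ((j i : ℝ) / 2 ^ k) ((j i + 1) / 2 ^ k) := by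
  ext x
  simp [DyadicCube]

theorem IsDyadicCube.measurableSet {Q : Set (Fin n → ℝ)} (hQ : IsDyadicCube Q) :
    MeasurableSet Q := by
  obtain ⟨k, j, rfl⟩ := hQ
  rw [DyadicCube.eq_pi]
  exact .univ_pi fun _ => measurableSet_Ico

theorem IsDyadicCube.isBounded {Q : Set (Fin n → ℝ)} (hQ : IsDyadicCube Q) :
    Bornology.IsBounded Q := by
  obtain ⟨k, j, rfl⟩ := hQ
  rw [DyadicCube.eq_pi]
  exact (Bornology.IsBounded.pi fun _ => Metric.isBounded_Icc _ _).subset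
    (Set.pi_mono fun _ _ => Set.Ico_subset_Icc_self)

theorem IsDyadicCube.measure_lt_top {Q : Set (Fin n → ℝ)} (hQ : IsDyadicCube Q)
    (ν : Measure (Fin n → ℝ)) [IsLocallyFiniteMeasure ν] : ν Q < ∞ :=
  hQ.isBounded.measure_lt_top

theorem countable_setOf_isDyadicCube : {Q : Set (Fin n → ℝ) | IsDyadicCube Q}.Countable := by
  refine (Set.countable_range fun kj : ℤ × (Fin n → ℤ) => DyadicCube n kj.1 kj.2).mono ?_
  rintro _ ⟨k, j, rfl⟩
  exact ⟨(k, j), rfl⟩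

abbrev DyadicCubes (n : ℕ) := {Q : Set (Fin n → ℝ) // IsDyadicCube Q}

instance : Countable (DyadicCubes n) :=
  countable_setOf_isDyadicCube.to_subtype

end DyadicCube

section IndicatorSum

variable {α ι : Type*} [MeasurableSpace α] [Countable ι] {s : ι → Set α}

theorem lintegral_tsum_indicator_const_mul (μ : Measure α) (hs : ∀ i, MeasurableSet (s i))
    (c : ι → ℝ≥0∞) {f : α → ℝ≥0∞} (hf : Measurable f) :
    ∫⁻ x, (∑' i, (s i).indicator (fun _ => c i) x) * f x ∂μ
      = ∑' i, c i * ∫⁻ x in s i, f x ∂μ := by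
  simp_rw [← ENNReal.tsum_mul_right, ← Set.indicator_mul_left]
  rw [lintegral_tsum fun i => ((hf.const_mul (c i)).indicator (hs i)).aemeasurable]
  refine tsum_congr fun i => ?_
  rw [lintegral_indicator (hs i), lintegral_const_mul _ hf]

theorem lintegral_tsum_indicator_const (μ : Measure α) (hs : ∀ i, MeasurableSet (s i))
    (c : ι → ℝ≥0∞) :
    ∫⁻ x, ∑' i, (s i).indicator (fun _ => c i) x ∂μ = ∑' i, c i * μ (s i) := by
  simpa using lintegral_tsum_indicator_const_mul μ hs c measurable_one

end IndicatorSum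

theorem rpow_setLIntegral_le {α : Type*} [MeasurableSpace α] (μ : Measure α) (A : Set α)
    {q : ℝ} (hq : 1 < q) {f : α → ℝ≥0∞} (hf : AEMeasurable f (μ.restrict A)) :
    (∫⁻ x in A, f x ∂μ) ^ q ≤ μ A ^ (q - 1) * ∫⁻ x in A, f x ^ q ∂μ := by
  have hq0 : 0 < q := zero_lt_one.trans hq
  have holder := ENNReal.lintegral_mul_le_Lp_mul_Lq (μ.restrict A)
    (Real.HolderConjugate.conjExponent hq) hf aemeasurable_const (g := fun _ => 1)
  simp only [Pi.mul_apply, mul_one, ENNReal.one_rpow, lintegral_const, Measure.restrict_apply_univ,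
    one_mul] at holder
  calc (∫⁻ x in A, f x ∂μ) ^ q
      ≤ ((∫⁻ x in A, f x ^ q ∂μ) ^ (1 / q) * μ A ^ (1 / q.conjExponent)) ^ q :=
        ENNReal.rpow_le_rpow holder hq0.le
    _ = μ A ^ (q - 1) * ∫⁻ x in A, f x ^ q ∂μ := by
        rw [ENNReal.mul_rpow_of_nonneg _ _ hq0.le, ← ENNReal.rpow_mul, ← ENNReal.rpow_mul,
          one_div_mul_cancel hq0.ne', ENNReal.rpow_one, mul_comm, Real.conjExponent]
        congr 2
        field_simp [(sub_pos.2 hq).ne']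

theorem ENNReal.rpow_one_div_le_mul_rpow_one_div_iff {X C Y : ℝ≥0∞} {p q : ℝ} (hq : 0 < q) :
    X ^ (1 / q) ≤ C * Y ^ (1 / p) ↔ X ≤ C ^ q * Y ^ (q / p) := by
  rw [← ENNReal.rpow_le_rpow_iff hq, ← ENNReal.rpow_mul, one_div_mul_cancel hq.ne',
    ENNReal.rpow_one, ENNReal.mul_rpow_of_nonneg _ _ hq.le, ← ENNReal.rpow_mul, one_div_mul_eq_div]

section DyadicSum

variable {n : ℕ}

def dyadicSum (c : Set (Fin n → ℝ) → ℝ≥0∞) (x : Fin n → ℝ) : ℝ≥0∞ :=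
  ∑' Q : DyadicCubes n, Q.1.indicator (fun _ => c Q.1) x

def dyadicWeight (σ μ : Measure (Fin n → ℝ)) (lam : Set (Fin n → ℝ) → ℝ≥0∞) (q : ℝ)
    (Q : Set (Fin n → ℝ)) : ℝ≥0∞ :=
  lam Q ^ q * σ Q ^ (q - 1) * μ Q

theorem measurable_dyadicSum (c : Set (Fin n → ℝ) → ℝ≥0∞) : Measurable (dyadicSum c) :=
  .tsum fun Q => measurable_const.indicator Q.2.measurableSet

theorem lintegral_dyadicSum (ν : Measure (Fin n → ℝ)) (c : Set (Fin n → ℝ) → ℝ≥0∞) :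
    ∫⁻ x, dyadicSum c x ∂ν = ∑' Q : DyadicCubes n, c Q.1 * ν Q.1 :=
  lintegral_tsum_indicator_const ν (fun Q => Q.2.measurableSet) _

theorem lintegral_dyadicSum_mul (ν : Measure (Fin n → ℝ)) (c : Set (Fin n → ℝ) → ℝ≥0∞)
    {f : (Fin n → ℝ) → ℝ≥0∞} (hf : Measurable f) :
    ∫⁻ x, dyadicSum c x * f x ∂ν = ∑' Q : DyadicCubes n, c Q.1 * ∫⁻ x in Q.1, f x ∂ν :=
  lintegral_tsum_indicator_const_mul ν (fun Q => Q.2.measurableSet) _ hf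

end DyadicSum

section Sufficiency

variable {n : ℕ} (σ μ : Measure (Fin n → ℝ)) (lam : Set (Fin n → ℝ) → ℝ≥0∞) {p q : ℝ}

theorem lintegral_dyadicSum_setLIntegral_rpow_le (hq : 1 < q) (hqp : q < p)
    {f : (Fin n → ℝ) → ℝ≥0∞} (hf : Measurable f) :
    ∫⁻ x, dyadicSum (fun Q => lam Q ^ q * (∫⁻ y in Q, f y ∂σ) ^ q) x ∂μ
      ≤ (∫⁻ x, dyadicSum (dyadicWeight σ μ lam q) x ^ (p / (p - q)) ∂σ) ^ ((p - q) / p)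
        * (∫⁻ x, f x ^ p ∂σ) ^ (q / p) := by
  have hq0 : 0 < q := zero_lt_one.trans hq
  have hpq : 0 < p - q := sub_pos.2 hqp
  have hp0 : 0 < p := hq0.trans hqp
  have hconj : (p / (p - q)).HolderConjugate (p / q) := by
    rw [Real.holderConjugate_iff]
    refine ⟨(one_lt_div hpq).2 (by linarith), ?_⟩
    field_simp
    ring
  calc ∫⁻ x, dyadicSum (fun Q => lam Q ^ q * (∫⁻ y in Q, f y ∂σ) ^ q) x ∂μ
      = ∑' Q : DyadicCubes n, lam Q.1 ^ q * (∫⁻ y in Q.1, f y ∂σ) ^ q * μ Q.1 :=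
        lintegral_dyadicSum μ _
    _ ≤ ∑' Q : DyadicCubes n, dyadicWeight σ μ lam q Q.1 * ∫⁻ y in Q.1, f y ^ q ∂σ := by
        refine ENNReal.tsum_le_tsum fun Q => ?_
        calc lam Q.1 ^ q * (∫⁻ y in Q.1, f y ∂σ) ^ q * μ Q.1
            ≤ lam Q.1 ^ q * (σ Q.1 ^ (q - 1) * ∫⁻ y in Q.1, f y ^ q ∂σ) * μ Q.1 := by
              gcongr
              exact rpow_setLIntegral_le σ Q.1 hq hf.aemeasurable
          _ = _ := by
              rw [dyadicWeight]
              ring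
    _ = ∫⁻ x, dyadicSum (dyadicWeight σ μ lam q) x * f x ^ q ∂σ :=
        (lintegral_dyadicSum_mul σ _ (hf.pow_const q)).symm
    _ ≤ (∫⁻ x, dyadicSum (dyadicWeight σ μ lam q) x ^ (p / (p - q)) ∂σ) ^ (1 / (p / (p - q)))
          * (∫⁻ x, (f x ^ q) ^ (p / q) ∂σ) ^ (1 / (p / q)) :=
        ENNReal.lintegral_mul_le_Lp_mul_Lq σ hconj (measurable_dyadicSum _).aemeasurable
          (hf.pow_const q).aemeasurable
    _ = _ := by
        simp_rw [← ENNReal.rpow_mul, mul_div_cancel₀ p hq0.ne', one_div_div]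

end Sufficiency

theorem Real.add_rpow_le_rpow_add_mul {a b s : ℝ} (ha : 0 ≤ a) (hb : 0 ≤ b) (hs : 1 ≤ s) :
    (a + b) ^ s ≤ a ^ s + s * b * (a + b) ^ (s - 1) := by
  rcases (add_nonneg ha hb).eq_or_lt with hx | hx
  · rw [← hx, Real.zero_rpow (by linarith)]
    positivity
  -- Bernoulli's inequality at `-b / (a + b)`, scaled by `(a + b) ^ s`.
  have bernoulli := one_add_mul_self_le_rpow_one_add
    (neg_le_neg ((div_le_one hx).2 (le_add_of_nonneg_left ha))) hs
  have hsplit : 1 + -(b / (a + b)) = a / (a + b) := by field_simp; ring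
  rw [hsplit, Real.div_rpow ha hx.le, le_div_iff₀ (Real.rpow_pos_of_pos hx s)] at bernoulli
  rw [Real.rpow_sub_one hx.ne']
  have hxs : 0 < (a + b) ^ s := Real.rpow_pos_of_pos hx s
  calc (a + b) ^ s = (1 + s * -(b / (a + b))) * (a + b) ^ s + s * b * ((a + b) ^ s / (a + b)) := by
        field_simp; ring
    _ ≤ a ^ s + s * b * ((a + b) ^ s / (a + b)) := by gcongr

theorem ENNReal.add_rpow_le_rpow_add_mul {a b : ℝ≥0∞} {s : ℝ} (hs : 1 ≤ s) :
    (a + b) ^ s ≤ a ^ s + ENNReal.ofReal s * b * (a + b) ^ (s - 1) := by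
  have hs0 : 0 < s := zero_lt_one.trans_le hs
  rcases eq_or_ne a ∞ with rfl | ha
  · simp [ENNReal.top_rpow_of_pos hs0]
  rcases eq_or_ne b ∞ with rfl | hb
  · have : (∞ : ℝ≥0∞) ^ (s - 1) ≠ 0 := by simp [ENNReal.rpow_eq_zero_iff, hs]
    simp [ENNReal.mul_top, hs0, this]
  rw [← ENNReal.ofReal_toReal ha, ← ENNReal.ofReal_toReal hb]
  have ha' := ENNReal.toReal_nonneg (a := a)
  have hb' := ENNReal.toReal_nonneg (a := b)
  rw [← ENNReal.ofReal_add ha' hb', ENNReal.ofReal_rpow_of_nonneg (by positivity) hs0.le,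
    ENNReal.ofReal_rpow_of_nonneg ha' hs0.le,
    ENNReal.ofReal_rpow_of_nonneg (by positivity) (by linarith), ← ENNReal.ofReal_mul hs0.le,
    ← ENNReal.ofReal_mul (by positivity), ← ENNReal.ofReal_add (by positivity) (by positivity)]
  exact ENNReal.ofReal_le_ofReal (Real.add_rpow_le_rpow_add_mul ha' hb' hs)

open Classical in
theorem ENNReal.rpow_sum_le_of_isChain {ι : Type*} [PartialOrder ι] (b : ι → ℝ≥0∞) {s : ℝ}
    (hs : 1 ≤ s) (S : Finset ι) (hS : IsChain (· ≤ ·) (S : Set ι)) :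
    (∑ i ∈ S, b i) ^ s ≤ ENNReal.ofReal s * ∑ i ∈ S, b i * (∑ j ∈ S with i ≤ j, b j) ^ (s - 1) := by
  induction S using Finset.strongInduction with
  | H S ih =>
  rcases S.eq_empty_or_nonempty with rfl | hne
  · simp [ENNReal.zero_rpow_of_pos (zero_lt_one.trans_le hs)]
  obtain ⟨m, hmS, hmin⟩ := Finset.exists_minimal hne
  have hm_le : ∀ i ∈ S, m ≤ i := fun i hi =>
    (hS.total hmS hi).elim id fun him => hmin hi him
  have hup_m : S.filter (m ≤ ·) = S := Finset.filter_true_of_mem hm_le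
  have hup : ∀ i ∈ S.erase m, S.filter (i ≤ ·) = (S.erase m).filter (i ≤ ·) := by
    intro i hi
    ext j
    simp only [Finset.mem_filter, Finset.mem_erase]
    constructor
    · rintro ⟨hj, hij⟩
      refine ⟨⟨?_, hj⟩, hij⟩
      rintro rfl
      exact (Finset.mem_erase.1 hi).1 (le_antisymm hij (hm_le i (Finset.mem_erase.1 hi).2))
    · rintro ⟨⟨-, hj⟩, hij⟩
      exact ⟨hj, hij⟩
  have ih' := ih (S.erase m) (Finset.erase_ssubset hmS) (hS.mono (by simp))
  have hrhs : ∑ i ∈ S, b i * (∑ j ∈ S with i ≤ j, b j) ^ (s - 1)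
      = b m * (∑ i ∈ S, b i) ^ (s - 1)
        + ∑ i ∈ S.erase m, b i * (∑ j ∈ S.erase m with i ≤ j, b j) ^ (s - 1) := by
    rw [← Finset.add_sum_erase S _ hmS, hup_m]
    exact congrArg _ (Finset.sum_congr rfl fun i hi => by rw [hup i hi])
  rw [hrhs, ← Finset.add_sum_erase S b hmS, add_comm (b m)]
  calc (∑ i ∈ S.erase m, b i + b m) ^ s
      ≤ (∑ i ∈ S.erase m, b i) ^ s
          + ENNReal.ofReal s * b m * (∑ i ∈ S.erase m, b i + b m) ^ (s - 1) :=
        ENNReal.add_rpow_le_rpow_add_mul hs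
    _ ≤ _ := by
        rw [mul_add, mul_assoc, add_comm]
        gcongr

open Classical in
theorem rpow_sum_indicator_le_of_nested {α ι : Type*} [PartialOrder ι] {s : ι → Set α}
    (hmono : Monotone s) (hnest : ∀ i j, (s i ∩ s j).Nonempty → i ≤ j ∨ j ≤ i)
    (b : ι → ℝ≥0∞) {r : ℝ} (hr : 1 ≤ r) (F : Finset ι) (x : α) :
    (∑ i ∈ F, (s i).indicator (fun _ => b i) x) ^ r
      ≤ ENNReal.ofReal r
          * ∑ i ∈ F, (s i).indicator (fun _ => b i * (∑ j ∈ F with i ≤ j, b j) ^ (r - 1)) x := by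
  have hchain : IsChain (· ≤ ·) ((F.filter (x ∈ s ·) : Finset ι) : Set ι) := by
    intro i hi j hj _
    rw [Finset.coe_filter] at hi hj
    exact hnest i j ⟨x, hi.2, hj.2⟩
  -- Every `j ≥ i` with `x ∈ s i` also contains `x`, so the ancestors of `i` lie in the chain.
  have hup : ∀ i ∈ F.filter (x ∈ s ·),
      F.filter (i ≤ ·) = (F.filter (x ∈ s ·)).filter (i ≤ ·) := by
    intro i hi
    rw [Finset.filter_filter]
    exact Finset.filter_congr fun j _ =>
      ⟨fun hij => ⟨hmono hij (Finset.mem_filter.1 hi).2, hij⟩, And.right⟩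
  simp only [Set.indicator_apply, ← Finset.sum_filter]
  refine (ENNReal.rpow_sum_le_of_isChain b hr _ hchain).trans_eq ?_
  exact congrArg _ (Finset.sum_congr rfl fun i hi => by rw [hup i hi])

theorem ENNReal.le_rpow_inv_of_le_mul_rpow {X K : ℝ≥0∞} {θ : ℝ} (hX : X ≠ ∞) (hθ : θ < 1)
    (h : X ≤ K * X ^ θ) : X ≤ K ^ (1 - θ)⁻¹ := by
  rcases eq_or_ne X 0 with rfl | hX0
  · exact zero_le
  have hpos : 0 < 1 - θ := sub_pos.2 hθ
  have hK : X ^ (1 - θ) ≤ K := by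
    rw [ENNReal.rpow_sub _ _ hX0 hX, ENNReal.rpow_one]
    exact ENNReal.div_le_of_le_mul h
  calc X = (X ^ (1 - θ)) ^ (1 - θ)⁻¹ := by
        rw [← ENNReal.rpow_mul, mul_inv_cancel₀ hpos.ne', ENNReal.rpow_one]
    _ ≤ K ^ (1 - θ)⁻¹ := ENNReal.rpow_le_rpow hK (inv_pos.2 hpos).le

section FiniteDyadicSum

variable {n : ℕ}

def finiteDyadicSum (F : Finset (DyadicCubes n)) (c : Set (Fin n → ℝ) → ℝ≥0∞)
    (x : Fin n → ℝ) : ℝ≥0∞ :=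
  ∑ Q ∈ F, Q.1.indicator (fun _ => c Q.1) x

theorem dyadicSum_eq_iSup_finiteDyadicSum (c : Set (Fin n → ℝ) → ℝ≥0∞) (x : Fin n → ℝ) :
    dyadicSum c x = ⨆ F, finiteDyadicSum F c x :=
  ENNReal.tsum_eq_iSup_sum

theorem measurable_finiteDyadicSum (F : Finset (DyadicCubes n)) (c : Set (Fin n → ℝ) → ℝ≥0∞) :
    Measurable (finiteDyadicSum F c) :=
  Finset.measurable_sum F fun Q _ => measurable_const.indicator Q.2.measurableSet

theorem finiteDyadicSum_mono {F F' : Finset (DyadicCubes n)} (h : F ⊆ F')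
    (c : Set (Fin n → ℝ) → ℝ≥0∞) (x : Fin n → ℝ) :
    finiteDyadicSum F c x ≤ finiteDyadicSum F' c x :=
  Finset.sum_le_sum_of_subset h

open Classical in
theorem sum_ancestors_le_finiteDyadicSum (F : Finset (DyadicCubes n))
    (c : Set (Fin n → ℝ) → ℝ≥0∞) (Q : DyadicCubes n) {y : Fin n → ℝ} (hy : y ∈ Q.1) :
    ∑ R ∈ F with Q ≤ R, c R.1 ≤ finiteDyadicSum F c y := by
  rw [Finset.sum_filter]
  refine Finset.sum_le_sum fun R _ => ?_
  split_ifs with hQR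
  · rw [Set.indicator_of_mem (hQR hy)]
  · exact zero_le

open Classical in
theorem rpow_finiteDyadicSum_le (F : Finset (DyadicCubes n)) (c : Set (Fin n → ℝ) → ℝ≥0∞)
    {r : ℝ} (hr : 1 ≤ r) (x : Fin n → ℝ) :
    finiteDyadicSum F c x ^ r ≤ ENNReal.ofReal r
      * ∑ Q ∈ F, Q.1.indicator (fun _ => c Q.1 * (∑ R ∈ F with Q ≤ R, c R.1) ^ (r - 1)) x :=
  rpow_sum_indicator_le_of_nested (s := Subtype.val) (fun _ _ h => h)
    (fun Q R h => Q.2.subset_or_subset R.2 h) (fun Q => c Q.1) hr F x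

theorem lintegral_rpow_finiteDyadicSum_ne_top (ν : Measure (Fin n → ℝ)) [IsLocallyFiniteMeasure ν]
    (F : Finset (DyadicCubes n)) {c : Set (Fin n → ℝ) → ℝ≥0∞} (hc : ∀ Q ∈ F, c Q.1 ≠ ∞)
    {r : ℝ} (hr : 0 < r) :
    ∫⁻ x, finiteDyadicSum F c x ^ r ∂ν ≠ ∞ := by
  set U := ⋃ Q ∈ F, Q.1
  have hbound : ∀ x, finiteDyadicSum F c x ^ r ≤ U.indicator (fun _ => (∑ Q ∈ F, c Q.1) ^ r) x := by
    intro x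
    by_cases hx : x ∈ U
    · rw [Set.indicator_of_mem hx]
      refine ENNReal.rpow_le_rpow (Finset.sum_le_sum fun Q _ => ?_) hr.le
      exact Set.indicator_apply_le' (fun _ => le_rfl) fun _ => zero_le
    · have : finiteDyadicSum F c x = 0 :=
        Finset.sum_eq_zero fun Q hQ => Set.indicator_of_notMem
          (fun hxQ => hx (Set.mem_biUnion hQ hxQ)) _
      rw [Set.indicator_of_notMem hx, this, ENNReal.zero_rpow_of_pos hr]
  have hU : MeasurableSet U := .biUnion F.countable_toSet fun Q _ => Q.2.measurableSet
  refine ne_top_of_le_ne_top ?_ (lintegral_mono hbound)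
  rw [lintegral_indicator_const hU]
  refine ENNReal.mul_ne_top (ENNReal.rpow_ne_top_of_nonneg hr.le (ENNReal.sum_ne_top.2 hc)) ?_
  exact ne_top_of_le_ne_top (ENNReal.sum_ne_top.2 fun Q _ => (Q.2.measure_lt_top ν).ne)
    (measure_biUnion_finset_le F _)

end FiniteDyadicSum

section Necessity

variable {n : ℕ} (σ μ : Measure (Fin n → ℝ)) (lam : Set (Fin n → ℝ) → ℝ≥0∞) {p q : ℝ}
  {B : ℝ≥0∞}

theorem dyadicWeight_ne_top_of_testing [IsLocallyFiniteMeasure σ] (hq : 1 < q) (hp : 0 < p)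
    (hB : B ≠ ∞)
    (H : ∀ f, Measurable f →
      ∫⁻ x, dyadicSum (fun Q => lam Q ^ q * (∫⁻ y in Q, f y ∂σ) ^ q) x ∂μ
        ≤ B * (∫⁻ x, f x ^ p ∂σ) ^ (q / p))
    {Q : Set (Fin n → ℝ)} (hQ : IsDyadicCube Q) :
    dyadicWeight σ μ lam q Q ≠ ∞ := by
  have hQm := hQ.measurableSet
  have hσQ := (hQ.measure_lt_top σ).ne
  have hpow : (fun x => Q.indicator (1 : (Fin n → ℝ) → ℝ≥0∞) x ^ p) = Q.indicator 1 := by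
    ext x
    by_cases hx : x ∈ Q <;> simp [hx, ENNReal.zero_rpow_of_pos hp]
  have htest : lam Q ^ q * σ Q ^ q * μ Q ≤ B * σ Q ^ (q / p) := by
    calc lam Q ^ q * σ Q ^ q * μ Q
        = lam Q ^ q * (∫⁻ y in Q, Q.indicator 1 y ∂σ) ^ q * μ Q := by
          rw [lintegral_indicator_one hQm, Measure.restrict_apply_self]
      _ ≤ ∑' R : DyadicCubes n, lam R.1 ^ q * (∫⁻ y in R.1, Q.indicator 1 y ∂σ) ^ q * μ R.1 :=
          ENNReal.le_tsum (f := fun R : DyadicCubes n =>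
            lam R.1 ^ q * (∫⁻ y in R.1, Q.indicator 1 y ∂σ) ^ q * μ R.1) ⟨Q, hQ⟩
      _ = ∫⁻ x, dyadicSum (fun R => lam R ^ q * (∫⁻ y in R, Q.indicator 1 y ∂σ) ^ q) x ∂μ := by
          rw [lintegral_dyadicSum]
      _ ≤ B * σ Q ^ (q / p) := by
          simpa [hpow, lintegral_indicator_one hQm] using H _ (measurable_one.indicator hQm)
  rcases eq_or_ne (σ Q) 0 with h0 | h0
  · simp [dyadicWeight, h0, ENNReal.zero_rpow_of_pos (sub_pos.2 hq)]
  have hdiv : dyadicWeight σ μ lam q Q = lam Q ^ q * σ Q ^ q * μ Q / σ Q := by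
    rw [dyadicWeight, ENNReal.rpow_sub _ _ h0 hσQ, ENNReal.rpow_one, div_eq_mul_inv,
      div_eq_mul_inv]
    ring
  rw [hdiv]
  refine (ENNReal.div_lt_top (ne_top_of_le_ne_top ?_ htest) h0).ne
  exact ENNReal.mul_ne_top hB (ENNReal.rpow_ne_top_of_nonneg (by positivity) hσQ)

theorem dyadicWeight_mul_rpow_mul_measure_le (hq : 1 < q) {t : ℝ} (ht : 0 ≤ t)
    {Q : Set (Fin n → ℝ)} {a : ℝ≥0∞} {g : (Fin n → ℝ) → ℝ≥0∞} (hg : Measurable g)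
    (hag : ∀ y ∈ Q, a ≤ g y) :
    dyadicWeight σ μ lam q Q * a ^ (t * q) * σ Q
      ≤ lam Q ^ q * (∫⁻ y in Q, g y ^ t ∂σ) ^ q * μ Q := by
  have hq0 : 0 < q := zero_lt_one.trans hq
  have hlow : a ^ t * σ Q ≤ ∫⁻ y in Q, g y ^ t ∂σ := by
    rw [← setLIntegral_const]
    exact setLIntegral_mono (hg.pow_const t) fun y hy => ENNReal.rpow_le_rpow (hag y hy) ht
  have hσ : σ Q ^ (q - 1) * σ Q = σ Q ^ q := by
    conv_rhs => rw [← sub_add_cancel q 1]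
    rw [ENNReal.rpow_add_of_nonneg _ _ (by linarith) zero_le_one, ENNReal.rpow_one]
  calc dyadicWeight σ μ lam q Q * a ^ (t * q) * σ Q
      = lam Q ^ q * (a ^ t * σ Q) ^ q * μ Q := by
        rw [ENNReal.mul_rpow_of_nonneg _ _ hq0.le, ← ENNReal.rpow_mul, ← hσ, dyadicWeight]
        ring
    _ ≤ lam Q ^ q * (∫⁻ y in Q, g y ^ t ∂σ) ^ q * μ Q := by gcongr

open Classical in
theorem lintegral_rpow_finiteDyadicSum_le_mul (hq : 1 < q) (hqp : q < p)
    (H : ∀ f, Measurable f →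
      ∫⁻ x, dyadicSum (fun Q => lam Q ^ q * (∫⁻ y in Q, f y ∂σ) ^ q) x ∂μ
        ≤ B * (∫⁻ x, f x ^ p ∂σ) ^ (q / p))
    (F : Finset (DyadicCubes n)) :
    ∫⁻ x, finiteDyadicSum F (dyadicWeight σ μ lam q) x ^ (p / (p - q)) ∂σ
      ≤ ENNReal.ofReal (p / (p - q)) * B
        * (∫⁻ x, finiteDyadicSum F (dyadicWeight σ μ lam q) x ^ (p / (p - q)) ∂σ) ^ (q / p) := by
  set c := dyadicWeight σ μ lam q
  set g := finiteDyadicSum F c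
  set r' := p / (p - q)
  set anc : DyadicCubes n → ℝ≥0∞ := fun Q => ∑ R ∈ F with Q ≤ R, c R.1
  have hpq : 0 < p - q := sub_pos.2 hqp
  have hr' : 1 ≤ r' := (one_le_div hpq).2 (by linarith)
  have hexp : r' - 1 = (p - q)⁻¹ * q := by
    simp only [r']
    field_simp
    ring
  set f := fun x => g x ^ (p - q)⁻¹
  have hf : Measurable f := (measurable_finiteDyadicSum F c).pow_const _
  have hfp : ∀ x, f x ^ p = g x ^ r' := fun x => by
    rw [← ENNReal.rpow_mul, inv_mul_eq_div]
  have hcube : ∀ Q : DyadicCubes n,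
      c Q.1 * anc Q ^ (r' - 1) * σ Q.1 ≤ lam Q.1 ^ q * (∫⁻ y in Q.1, f y ∂σ) ^ q * μ Q.1 :=
    fun Q => hexp ▸ dyadicWeight_mul_rpow_mul_measure_le σ μ lam hq (inv_pos.2 hpq).le
      (measurable_finiteDyadicSum F c) fun y hy => sum_ancestors_le_finiteDyadicSum F c Q hy
  calc ∫⁻ x, g x ^ r' ∂σ
      ≤ ∫⁻ x, ENNReal.ofReal r'
          * ∑ Q ∈ F, Q.1.indicator (fun _ => c Q.1 * anc Q ^ (r' - 1)) x ∂σ :=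
        lintegral_mono fun x => rpow_finiteDyadicSum_le F c hr' x
    _ = ENNReal.ofReal r' * ∑ Q ∈ F, c Q.1 * anc Q ^ (r' - 1) * σ Q.1 := by
        rw [lintegral_const_mul _ (Finset.measurable_sum F fun Q _ =>
            measurable_const.indicator Q.2.measurableSet),
          lintegral_finsetSum F fun Q _ => measurable_const.indicator Q.2.measurableSet]
        exact congrArg _ (Finset.sum_congr rfl fun Q _ =>
          lintegral_indicator_const Q.2.measurableSet _)
    _ ≤ ENNReal.ofReal r'
          * ∑' Q : DyadicCubes n, lam Q.1 ^ q * (∫⁻ y in Q.1, f y ∂σ) ^ q * μ Q.1 := by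
        gcongr
        exact (Finset.sum_le_sum fun Q _ => hcube Q).trans (ENNReal.sum_le_tsum F)
    _ = ENNReal.ofReal r'
          * ∫⁻ x, dyadicSum (fun Q => lam Q ^ q * (∫⁻ y in Q, f y ∂σ) ^ q) x ∂μ := by
        rw [lintegral_dyadicSum]
    _ ≤ ENNReal.ofReal r' * (B * (∫⁻ x, f x ^ p ∂σ) ^ (q / p)) := by
        gcongr
        exact H f hf
    _ = ENNReal.ofReal r' * B * (∫⁻ x, g x ^ r' ∂σ) ^ (q / p) := by
        simp_rw [hfp, mul_assoc]

theorem lintegral_dyadicSum_rpow_le_of_testing [IsLocallyFiniteMeasure σ] (hq : 1 < q)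
    (hqp : q < p) (hB : B ≠ ∞)
    (H : ∀ f, Measurable f →
      ∫⁻ x, dyadicSum (fun Q => lam Q ^ q * (∫⁻ y in Q, f y ∂σ) ^ q) x ∂μ
        ≤ B * (∫⁻ x, f x ^ p ∂σ) ^ (q / p)) :
    ∫⁻ x, dyadicSum (dyadicWeight σ μ lam q) x ^ (p / (p - q)) ∂σ
      ≤ (ENNReal.ofReal (p / (p - q)) * B) ^ (p / (p - q)) := by
  set c := dyadicWeight σ μ lam q
  have hp0 : 0 < p := (zero_lt_one.trans hq).trans hqp
  have hr' : 0 < p / (p - q) := div_pos hp0 (sub_pos.2 hqp)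
  -- Absorption needs an a priori finite integral, hence the detour through finite sums.
  have hfinite : ∀ F : Finset (DyadicCubes n),
      ∫⁻ x, finiteDyadicSum F c x ^ (p / (p - q)) ∂σ
        ≤ (ENNReal.ofReal (p / (p - q)) * B) ^ (p / (p - q)) := by
    intro F
    have hexp : (1 - q / p)⁻¹ = p / (p - q) := by
      field_simp [hp0.ne']
    have hne_top := lintegral_rpow_finiteDyadicSum_ne_top σ F (c := c)
      (fun Q _ => dyadicWeight_ne_top_of_testing σ μ lam hq hp0 hB H Q.2) hr'
    simpa only [hexp] using ENNReal.le_rpow_inv_of_le_mul_rpow hne_top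
      ((div_lt_one hp0).2 hqp) (lintegral_rpow_finiteDyadicSum_le_mul σ μ lam hq hqp H F)
  calc ∫⁻ x, dyadicSum c x ^ (p / (p - q)) ∂σ
      = ∫⁻ x, ⨆ F, finiteDyadicSum F c x ^ (p / (p - q)) ∂σ := by
        refine lintegral_congr fun x => ?_
        rw [dyadicSum_eq_iSup_finiteDyadicSum]
        exact (ENNReal.orderIsoRpow _ hr').map_iSup _
    _ = ⨆ F, ∫⁻ x, finiteDyadicSum F c x ^ (p / (p - q)) ∂σ :=
        lintegral_iSup_directed
          (fun F => ((measurable_finiteDyadicSum F c).pow_const _).aemeasurable)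
          (Monotone.directed_le fun _ _ hFF' x =>
            ENNReal.rpow_le_rpow (finiteDyadicSum_mono hFF' c x) hr'.le)
    _ ≤ _ := iSup_le hfinite

end Necessity

theorem s_eq_q_characterization_general
    {n : ℕ} (σ μ : Measure (Fin n → ℝ))
    [IsLocallyFiniteMeasure σ]
    (lam : Set (Fin n → ℝ) → ℝ≥0∞)
    (p q : ℝ) (hq : 1 < q) (hqp : q < p) :
    (∃ C : ℝ≥0∞, C ≠ ∞ ∧ ∀ f : (Fin n → ℝ) → ℝ≥0∞, Measurable f →
      (∫⁻ x, (∑' Q : {Q : Set (Fin n → ℝ) // IsDyadicCube Q},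
          Set.indicator Q.1 (fun _ => lam Q.1 ^ q * (∫⁻ y in Q.1, f y ∂σ) ^ q) x) ∂μ) ^ (1 / q)
        ≤ C * (∫⁻ x, f x ^ p ∂σ) ^ (1 / p))
    ↔ (∫⁻ x, (∑' Q : {Q : Set (Fin n → ℝ) // IsDyadicCube Q},
        Set.indicator Q.1 (fun _ => lam Q.1 ^ q * σ Q.1 ^ (q - 1) * μ Q.1) x)
          ^ (p / (p - q)) ∂σ) ≠ ∞ := by
  have hq0 : 0 < q := zero_lt_one.trans hq
  constructor
  · rintro ⟨C, hC, htest⟩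
    refine ne_top_of_le_ne_top ?_ (lintegral_dyadicSum_rpow_le_of_testing σ μ lam hq hqp
      (ENNReal.rpow_ne_top_of_nonneg hq0.le hC)
      fun f hf => (ENNReal.rpow_one_div_le_mul_rpow_one_div_iff hq0).1 (htest f hf))
    exact ENNReal.rpow_ne_top_of_nonneg (div_pos (hq0.trans hqp) (sub_pos.2 hqp)).le
      (ENNReal.mul_ne_top ENNReal.ofReal_ne_top (ENNReal.rpow_ne_top_of_nonneg hq0.le hC))
  · intro hG
    refine ⟨(_ ^ ((p - q) / p)) ^ (1 / q),
      ENNReal.rpow_ne_top_of_nonneg (by positivity)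
        (ENNReal.rpow_ne_top_of_nonneg (div_pos (sub_pos.2 hqp) (hq0.trans hqp)).le hG),
      fun f hf => (ENNReal.rpow_one_div_le_mul_rpow_one_div_iff hq0).2 ?_⟩
    rw [← ENNReal.rpow_mul, one_div_mul_cancel hq0.ne', ENNReal.rpow_one]
    exact lintegral_dyadicSum_setLIntegral_rpow_le σ μ lam hq hqp hf

theorem s_eq_q_characterization
    {n : ℕ} (σ μ : Measure (Fin n → ℝ))
    [IsLocallyFiniteMeasure σ] [IsLocallyFiniteMeasure μ]
    (lam : Set (Fin n → ℝ) → ℝ≥0∞)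
    (p q : ℝ) (hq : 1 < q) (hqp : q < p) :
    (∃ C : ℝ≥0∞, C ≠ ∞ ∧ ∀ f : (Fin n → ℝ) → ℝ≥0∞, Measurable f →
      (∫⁻ x, (∑' Q : {Q : Set (Fin n → ℝ) // IsDyadicCube Q},
          Set.indicator Q.1 (fun _ => lam Q.1 ^ q * (∫⁻ y in Q.1, f y ∂σ) ^ q) x) ∂μ) ^ (1 / q)
        ≤ C * (∫⁻ x, f x ^ p ∂σ) ^ (1 / p))
    ↔ (∫⁻ x, (∑' Q : {Q : Set (Fin n → ℝ) // IsDyadicCube Q},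
        Set.indicator Q.1 (fun _ => lam Q.1 ^ q * σ Q.1 ^ (q - 1) * μ Q.1) x)
          ^ (p / (p - q)) ∂σ) ≠ ∞ :=
  s_eq_q_characterization_general σ μ lam p q hq hqp
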